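/- Let Γ be a finitely generated group with finite symmetric generating set S, and N ⊴ Γ a normal subgroup of polynomial growth whose distortion Δ_N^Γ(R) = sup{|g|_{N∩S} : g ∈ N, |g|_S ≤ R} is bounded by a polynomial in R, where N∩S generates N. If moreover the quotient Λ = Γ/N has vanishing algebraic entropy with respect to π(S), then h_w(Γ,S) = h_w(Λ,π(S)) = 0. More generally, |Λ(R,π(S))| ≤ |Γ(R,S)| ≤ |Γ(2R,S) ∩ N| · |Λ(R,π(S))|. -/

import Mathlib

/-! The quotient map sends `Γ(R)` onto `Λ(R)`. Conversely, choosing a section `σ` of `π`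
over `Γ(R)`, the map `g ↦ (g σ(π g)⁻¹, π g)` injects `Γ(R)` into `(Γ(2R) ∩ N) × Λ(R)`.
By the distortion bound `Γ(2R) ∩ N` lies in a ball of `N` of polynomial radius, hence has
polynomial size, so `log |Γ(R)| / R ≤ O(log R) / R + log |Λ(R)| / R → 0`. -/

open Filter Topology

def wordBall {G : Type*} [Group G] (S : Set G) (R : ℕ) : Set G :=
  {g | ∃ l : List G, (∀ x ∈ l, x ∈ S) ∧ l.length ≤ R ∧ l.prod = g}

section WordBall

variable {G : Type*} [Group G] {S : Set G}

theorem wordBall_mono {R R' : ℕ} (h : R ≤ R') : wordBall S R ⊆ wordBall S R' :=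
  fun _ ⟨l, hl, hlen, hp⟩ => ⟨l, hl, hlen.trans h, hp⟩

theorem mul_mem_wordBall {R R' : ℕ} {g h : G} (hg : g ∈ wordBall S R)
    (hh : h ∈ wordBall S R') : g * h ∈ wordBall S (R + R') := by
  obtain ⟨l, hl, hlen, rfl⟩ := hg
  obtain ⟨l', hl', hlen', rfl⟩ := hh
  refine ⟨l ++ l', fun x hx => ?_, by simpa using Nat.add_le_add hlen hlen', List.prod_append⟩
  rcases List.mem_append.1 hx with hx | hx
  exacts [hl x hx, hl' x hx]

theorem inv_mem_wordBall (hsym : ∀ x ∈ S, x⁻¹ ∈ S) {R : ℕ} {g : G}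
    (hg : g ∈ wordBall S R) : g⁻¹ ∈ wordBall S R := by
  obtain ⟨l, hl, hlen, rfl⟩ := hg
  refine ⟨(l.map (·⁻¹)).reverse, ?_, by simpa using hlen, (List.prod_inv_reverse l).symm⟩
  simp only [List.mem_reverse, List.mem_map]
  rintro _ ⟨a, ha, rfl⟩
  exact hsym a (hl a ha)

theorem Set.Finite.wordBall (hS : S.Finite) (R : ℕ) : (wordBall S R).Finite := by
  have := hS.to_subtype
  refine ((List.finite_length_le S R).image fun l => (l.map (↑)).prod).subset ?_
  rintro _ ⟨l, hl, hlen, rfl⟩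
  lift l to List S using hl
  exact ⟨l, by simpa using hlen, rfl⟩

theorem wordBall_image {H : Type*} [Group H] (φ : G →* H) (R : ℕ) :
    wordBall (φ '' S) R = φ '' wordBall S R := by
  ext h
  constructor
  · rintro ⟨l, hl, hlen, rfl⟩
    have hφσ : ∀ x ∈ l, (φ ∘ Function.invFunOn φ S) x = id x := fun x hx =>
      Function.invFunOn_eq (hl x hx)
    refine ⟨(l.map (Function.invFunOn φ S)).prod, ⟨_, ?_, by simpa using hlen, rfl⟩, ?_⟩
    · simp only [List.mem_map]
      rintro _ ⟨x, hx, rfl⟩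
      exact Function.invFunOn_mem (hl x hx)
    · rw [map_list_prod, List.map_map, List.map_congr_left hφσ, List.map_id]
  · rintro ⟨_, ⟨l, hl, hlen, rfl⟩, rfl⟩
    refine ⟨l.map φ, ?_, by simpa using hlen, (map_list_prod φ l).symm⟩
    simp only [List.mem_map]
    rintro _ ⟨a, ha, rfl⟩
    exact ⟨a, hl a ha, rfl⟩

theorem card_wordBall_image_le {H : Type*} [Group H] (hS : S.Finite) (φ : G →* H) (R : ℕ) :
    Nat.card (wordBall (φ '' S) R) ≤ Nat.card (wordBall S R) := by
  rw [wordBall_image]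
  exact Nat.card_image_le (hS.wordBall R)

end WordBall

theorem Nat.card_le_card_mul_card_image_of_mul_inv_mem {G X : Type*} [Group G] (φ : G → X)
    {A T : Set G} (hA : A.Finite) (hT : T.Finite)
    (hAT : ∀ x ∈ A, ∀ y ∈ A, φ x = φ y → x * y⁻¹ ∈ T) :
    Nat.card A ≤ Nat.card T * Nat.card (φ '' A) := by
  have := hT.to_subtype
  have := (hA.image φ).to_subtype
  set σ := Function.invFunOn φ A
  have hσ : ∀ x ∈ A, σ (φ x) ∈ A ∧ φ (σ (φ x)) = φ x := fun x hx =>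
    ⟨Function.invFunOn_mem ⟨x, hx, rfl⟩, Function.invFunOn_eq ⟨x, hx, rfl⟩⟩
  let f : A → T × (φ '' A) := fun x =>
    (⟨x * (σ (φ x))⁻¹, hAT _ x.2 _ (hσ x x.2).1 (hσ x x.2).2.symm⟩,
      ⟨φ x, x, x.2, rfl⟩)
  have hf : Function.Injective f := by
    rintro ⟨x, hx⟩ ⟨y, hy⟩ hxy
    have hφ : φ x = φ y := congrArg (fun p => (p.2 : X)) hxy
    have hmul : x * (σ (φ x))⁻¹ = y * (σ (φ y))⁻¹ := congrArg (fun p => (p.1 : G)) hxy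
    rw [hφ] at hmul
    exact Subtype.ext (mul_right_cancel hmul)
  rw [← Nat.card_prod]
  exact Nat.card_le_card_of_injective f hf

theorem card_wordBall_le_card_inter_ker_mul_card_image {G H : Type*} [Group G] [Group H]
    {S : Set G} (hS : S.Finite) (hsym : ∀ x ∈ S, x⁻¹ ∈ S) (φ : G →* H) (R : ℕ) :
    Nat.card (wordBall S R) ≤
      Nat.card (wordBall S (2 * R) ∩ φ.ker : Set G) * Nat.card (wordBall (φ '' S) R) := by
  rw [wordBall_image]
  refine Nat.card_le_card_mul_card_image_of_mul_inv_mem φ (hS.wordBall R)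
    ((hS.wordBall _).inter_of_left _) fun x hx y hy hxy => ⟨?_, ?_⟩
  · rw [two_mul]
    exact mul_mem_wordBall hx (inv_mem_wordBall hsym hy)
  · simp [MonoidHom.mem_ker, hxy]

theorem card_wordBall_inter_le {G : Type*} [Group G] {N S : Set G} (hS : S.Finite)
    {CN mN CD mD : ℕ}
    (hNpoly : ∀ R : ℕ, 1 ≤ R → Nat.card (wordBall (N ∩ S) R) ≤ CN * R ^ mN)
    (hdist : ∀ R : ℕ, ∀ g ∈ N, g ∈ wordBall S R → g ∈ wordBall (N ∩ S) (CD * R ^ mD))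
    {R : ℕ} (hR : 1 ≤ R) :
    Nat.card (wordBall S R ∩ N : Set G) ≤ CN * (CD + 1) ^ mN * R ^ (mD * mN) := by
  have hR' : 1 ≤ (CD + 1) * R ^ mD := Nat.one_le_iff_ne_zero.2 (by positivity)
  calc Nat.card (wordBall S R ∩ N : Set G)
      ≤ Nat.card (wordBall (N ∩ S) ((CD + 1) * R ^ mD)) :=
        Nat.card_mono ((hS.subset Set.inter_subset_right).wordBall _) fun g ⟨hg, hgN⟩ =>
          wordBall_mono (by gcongr; omega) (hdist R g hgN hg)
    _ ≤ CN * ((CD + 1) * R ^ mD) ^ mN := hNpoly _ hR'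
    _ = CN * (CD + 1) ^ mN * R ^ (mD * mN) := by rw [mul_pow, pow_mul, mul_assoc]

theorem Real.log_natCast_le_add_of_le_mul {a x y : ℕ} (h : a ≤ x * y) :
    Real.log a ≤ Real.log x + Real.log y := by
  rcases Nat.eq_zero_or_pos a with rfl | ha
  · simpa using add_nonneg (Real.log_natCast_nonneg x) (Real.log_natCast_nonneg y)
  · have hxy : x * y ≠ 0 := by omega
    rw [← Real.log_mul (mod_cast left_ne_zero_of_mul hxy) (mod_cast right_ne_zero_of_mul hxy)]
    exact Real.log_le_log (mod_cast ha) (mod_cast h)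

theorem tendsto_log_div_of_le_mul {a u v : ℕ → ℕ} (h : ∀ᶠ R in atTop, a R ≤ u R * v R)
    (hu : Tendsto (fun R : ℕ => Real.log (u R) / R) atTop (𝓝 0))
    (hv : Tendsto (fun R : ℕ => Real.log (v R) / R) atTop (𝓝 0)) :
    Tendsto (fun R : ℕ => Real.log (a R) / R) atTop (𝓝 0) := by
  refine tendsto_of_tendsto_of_tendsto_of_le_of_le' tendsto_const_nhds
    (by simpa using hu.add hv) ?_ ?_
  · exact Eventually.of_forall fun R => div_nonneg (Real.log_natCast_nonneg _) R.cast_nonneg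
  · filter_upwards [h] with R hR
    rw [← add_div]
    exact div_le_div_of_nonneg_right (Real.log_natCast_le_add_of_le_mul hR) R.cast_nonneg

theorem tendsto_log_div_of_le_mul_pow {f : ℕ → ℕ} {C k : ℕ}
    (hf : ∀ᶠ R in atTop, f R ≤ C * R ^ k) :
    Tendsto (fun R : ℕ => Real.log (f R) / R) atTop (𝓝 0) := by
  refine tendsto_log_div_of_le_mul (u := fun _ => C) (v := fun R => R ^ k) hf
    (tendsto_const_div_atTop_nhds_zero_nat _) ?_
  have hlog : Tendsto (fun R : ℕ => Real.log R / R) atTop (𝓝 0) :=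
    Real.isLittleO_log_id_atTop.tendsto_div_nhds_zero.comp tendsto_natCast_atTop_atTop
  simpa [Real.log_pow, mul_div_assoc] using hlog.const_mul (k : ℝ)

theorem entropy_zero_of_polynomial_distortion_general {Γ : Type*} [Group Γ]
    (N : Subgroup Γ) [N.Normal]
    (S : Set Γ) (hfin : S.Finite) (hsym : ∀ x ∈ S, x⁻¹ ∈ S)
    (CN mN : ℕ)
    (hNpoly : ∀ R : ℕ, 1 ≤ R →
      Nat.card (wordBall ((N : Set Γ) ∩ S) R) ≤ CN * R ^ mN)
    (CD mD : ℕ)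
    (hdist : ∀ R : ℕ, ∀ g ∈ N, g ∈ wordBall S R →
      g ∈ wordBall ((N : Set Γ) ∩ S) (CD * R ^ mD))
    (hΛ : Tendsto (fun R : ℕ =>
        Real.log (Nat.card (wordBall ((QuotientGroup.mk' N) '' S) R)) / R) atTop (𝓝 0)) :
    (∀ R : ℕ,
      Nat.card (wordBall ((QuotientGroup.mk' N) '' S) R) ≤ Nat.card (wordBall S R) ∧
      Nat.card (wordBall S R) ≤
        Nat.card ((wordBall S (2 * R) ∩ (N : Set Γ) : Set Γ)) *
          Nat.card (wordBall ((QuotientGroup.mk' N) '' S) R)) ∧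
    Tendsto (fun R : ℕ => Real.log (Nat.card (wordBall S R)) / R) atTop (𝓝 0) := by
  have hcard : ∀ R : ℕ, Nat.card (wordBall S R) ≤
      Nat.card ((wordBall S (2 * R) ∩ (N : Set Γ) : Set Γ)) *
        Nat.card (wordBall ((QuotientGroup.mk' N) '' S) R) := fun R => by
    simpa using card_wordBall_le_card_inter_ker_mul_card_image hfin hsym (QuotientGroup.mk' N) R
  refine ⟨fun R => ⟨card_wordBall_image_le hfin _ R, hcard R⟩,
    tendsto_log_div_of_le_mul (Eventually.of_forall hcard) ?_ hΛ⟩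
  refine tendsto_log_div_of_le_mul_pow
    (C := CN * (CD + 1) ^ mN * 2 ^ (mD * mN)) (k := mD * mN) ?_
  filter_upwards [eventually_ge_atTop 1] with R hR
  calc _ ≤ CN * (CD + 1) ^ mN * (2 * R) ^ (mD * mN) :=
        card_wordBall_inter_le hfin hNpoly hdist (by omega)
    _ = CN * (CD + 1) ^ mN * 2 ^ (mD * mN) * R ^ (mD * mN) := by ring

/-- If `N ⊴ Γ` has polynomial growth with respect to `N ∩ S`, its distortion in `Γ` is
polynomially bounded, and the quotient `Λ = Γ/N` has vanishing algebraic entropy with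
respect to `π(S)`, then `|Λ(R,π(S))| ≤ |Γ(R,S)| ≤ |Γ(2R,S) ∩ N| · |Λ(R,π(S))|` and
`h_w(Γ,S) = h_w(Λ,π(S)) = 0`. -/
theorem entropy_zero_of_polynomial_distortion {Γ : Type*} [Group Γ]
    (N : Subgroup Γ) [N.Normal]
    (S : Set Γ) (hfin : S.Finite) (hsym : ∀ x ∈ S, x⁻¹ ∈ S)
    (hgen : Subgroup.closure S = ⊤)
    (hNgen : Subgroup.closure ((N : Set Γ) ∩ S) = N)
    (CN mN : ℕ)
    (hNpoly : ∀ R : ℕ, 1 ≤ R →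
      Nat.card (wordBall ((N : Set Γ) ∩ S) R) ≤ CN * R ^ mN)
    (CD mD : ℕ)
    (hdist : ∀ R : ℕ, ∀ g ∈ N, g ∈ wordBall S R →
      g ∈ wordBall ((N : Set Γ) ∩ S) (CD * R ^ mD))
    (hΛ : Tendsto (fun R : ℕ =>
        Real.log (Nat.card (wordBall ((QuotientGroup.mk' N) '' S) R)) / R) atTop (𝓝 0)) :
    (∀ R : ℕ,
      Nat.card (wordBall ((QuotientGroup.mk' N) '' S) R) ≤ Nat.card (wordBall S R) ∧
      Nat.card (wordBall S R) ≤
        Nat.card ((wordBall S (2 * R) ∩ (N : Set Γ) : Set Γ)) *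
          Nat.card (wordBall ((QuotientGroup.mk' N) '' S) R)) ∧
    Tendsto (fun R : ℕ => Real.log (Nat.card (wordBall S R)) / R) atTop (𝓝 0) :=
  entropy_zero_of_polynomial_distortion_general N S hfin hsym CN mN hNpoly CD mD hdist hΛ
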